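/- arXiv:1009.3595 — 5 statements merged into one kernel-verified Lean document; each statement's English description precedes it below -/
import Mathlib

section
/- Let m and c be positive integers. For each integer j with 1 ≤ j ≤ c−1 let w_j ∈ [0,1) be the fractional part of −mj/c, and let κ_{m,c} denote the number of integers j with 1 ≤ j ≤ c−1 such that w_1 + w_j ≥ 1. Then κ_{m,c} ≡ −m (mod c). -/
/-! With `x = -m/c` we have `w j = fract (j x)`, and the carry rule
`fract ((j+1) x) = fract x + fract (j x) - [1 ≤ fract x + fract (j x)]` telescopes over
`j = 1, …, c-1` to `κ_{m,c} = c · fract x - fract (c x) = c · fract (-m/c)`,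
which is `-m` minus a multiple of `c`. -/

open Finset Int

section FloorRing

variable {R : Type*} [CommRing R] [LinearOrder R] [IsStrictOrderedRing R] [FloorRing R]

theorem Int.fract_add_eq_sub_ite (a b : R) :
    fract (a + b) = fract a + fract b - if 1 ≤ fract a + fract b then 1 else 0 := by
  have ha₀ := fract_nonneg a
  have hb₀ := fract_nonneg b
  have ha₁ := fract_lt_one a
  have hb₁ := fract_lt_one b
  by_cases h : 1 ≤ fract a + fract b
  · rw [if_pos h]
    exact fract_eq_iff.2 ⟨by linarith, by linarith, ⌊a⌋ + ⌊b⌋ + 1,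
      by simp only [fract]; push_cast; ring⟩
  · rw [if_neg h, sub_zero]
    exact fract_eq_iff.2 ⟨by linarith, by linarith, ⌊a⌋ + ⌊b⌋,
      by simp only [fract]; push_cast; ring⟩

theorem card_filter_one_le_fract_add_fract (x : R) (n : ℕ) :
    (((Icc 1 n).filter fun j : ℕ => 1 ≤ fract x + fract (j * x)).card : R) =
      (n + 1) * fract x - fract ((n + 1) * x) := by
  induction n with
  | zero => simp
  | succ n ih =>
    have hcarry := fract_add_eq_sub_ite x ((n + 1 : ℕ) * x)
    rw [← insert_Icc_right_eq_Icc_add_one (by omega), filter_insert]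
    push_cast at hcarry ⊢
    rw [add_comm x, ← add_one_mul] at hcarry
    split_ifs at hcarry ⊢
    · rw [card_insert_of_notMem (by simp), Nat.cast_add, ih, hcarry]; push_cast; ring
    · rw [ih, hcarry]; ring

end FloorRing

theorem kappa_mod_eq_neg_m_general (m c : ℕ) (hc : 0 < c)
    (w : ℕ → ℚ) (hw : ∀ j, w j = Int.fract (-((m : ℚ) * j) / c)) :
    ((((Finset.Icc 1 (c - 1)).filter (fun j => 1 ≤ w 1 + w j)).card : ℤ))
      ≡ -(m : ℤ) [ZMOD (c : ℤ)] := by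
  set x : ℚ := -(m : ℚ) / c with hx
  have hw' : ∀ j : ℕ, w j = fract ((j : ℚ) * x) := fun j => by rw [hw, hx]; ring_nf
  have hcx : (c : ℚ) * x = ((-m : ℤ) : ℚ) := by rw [hx]; push_cast; field_simp
  have hκ := card_filter_one_le_fract_add_fract x (c - 1)
  have hc₁ : ((c - 1 : ℕ) : ℚ) + 1 = c := by
    rw [Nat.cast_sub hc, Nat.cast_one, sub_add_cancel]
  rw [hc₁, hcx, fract_intCast, sub_zero] at hκ
  simp only [hw', Nat.cast_one, one_mul]
  refine Int.modEq_iff_dvd.2 ⟨⌊x⌋, Int.cast_injective (α := ℚ) ?_⟩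
  push_cast at hcx ⊢
  rw [hκ, ← Int.self_sub_floor, mul_sub, hcx]
  ring

/-- For positive integers `m`, `c`, with `w j` the fractional part of `-mj/c`,
the number `κ_{m,c}` of `j ∈ {1,…,c-1}` with `w 1 + w j ≥ 1` satisfies
`κ_{m,c} ≡ -m (mod c)`. -/
theorem kappa_mod_eq_neg_m (m c : ℕ) (hm : 0 < m) (hc : 0 < c)
    (w : ℕ → ℚ) (hw : ∀ j, w j = Int.fract (-((m : ℚ) * j) / c)) :
    ((((Finset.Icc 1 (c - 1)).filter (fun j => 1 ≤ w 1 + w j)).card : ℤ))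
      ≡ -(m : ℤ) [ZMOD (c : ℤ)] :=
  kappa_mod_eq_neg_m_general m c hc w hw
end

section
/- Let m and c be positive integers and let v be the unique integer with 0 ≤ v < c and m ≡ −v (mod c). For each integer j with 1 ≤ j ≤ c−1 let w_j ∈ [0,1) be the fractional part of −mj/c, and let κ_{m,c} denote the number of integers j with 1 ≤ j ≤ c−1 such that w_1 + w_j ≥ 1. Then κ_{m,c} = v; that is, κ_{m,c} equals the residue of −m modulo c. -/
/-!
Writing `v ≡ -m (mod c)`, we get `w j = (v j mod c) / c`, so `w 1 + w j ≥ 1` says exactly that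
adding `v` to `v j` carries past a multiple of `c`, i.e. `⌊v (j+1)/c⌋ = ⌊v j/c⌋ + 1`. Summing these
increments over `0 ≤ j < c` telescopes to `⌊v c/c⌋ = v`, and `j = 0` never carries since `v < c`.
-/

open Finset

namespace Nat

theorem card_filter_range_le_mul_mod_add {n c : ℕ} (hn : n < c) (k : ℕ) :
    #{j ∈ range k | c ≤ n * j % c + n} = n * k / c := by
  have hc : 0 < c := by omega
  induction k with
  | zero => simp
  | succ k ih =>
    rw [range_add_one, filter_insert, mul_add_one, Nat.add_div hc, Nat.mod_eq_of_lt hn,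
      Nat.div_eq_of_lt hn]
    split_ifs
    · rw [card_insert_of_notMem (by simp), ih]
    · rw [ih, add_zero, add_zero]

end Nat

theorem Int.fract_neg_mul_div_eq_mul_mod_div {K : Type*} [Field K] [LinearOrder K]
    [IsOrderedRing K] [FloorRing K] {m n c : ℕ} (h : c ∣ m + n) (j : ℕ) :
    Int.fract (-((m : K) * j) / c) = ((n * j % c : ℕ) : K) / c := by
  rw [← Int.fract_div_natCast_eq_div_natCast_mod]
  obtain ⟨q, hq⟩ := h
  rcases c.eq_zero_or_pos with rfl | hc
  · simp
  refine Int.fract_eq_fract.mpr ⟨-(q * j : ℕ), ?_⟩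
  have hmn : (m : K) + n = c * q := by exact_mod_cast hq
  push_cast
  field_simp
  linear_combination (-(j : K)) * hmn

theorem kappa_eq_residue_general (m c : ℕ) (v : ℤ)
    (hv0 : 0 ≤ v) (hvc : v < (c : ℤ)) (hmv : (m : ℤ) ≡ -v [ZMOD (c : ℤ)])
    (w : ℕ → ℚ) (hw : ∀ j, w j = Int.fract (-((m : ℚ) * j) / c)) :
    ((((Finset.Icc 1 (c - 1)).filter (fun j => 1 ≤ w 1 + w j)).card : ℤ)) = v := by
  lift v to ℕ using hv0 with n
  have hn : n < c := by exact_mod_cast hvc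
  have hdvd : c ∣ m + n := by
    have : (c : ℤ) ∣ m + n := by simpa using hmv.symm.dvd
    exact_mod_cast this
  have hwj (j : ℕ) : w j = ((n * j % c : ℕ) : ℚ) / c := by
    rw [hw, Int.fract_neg_mul_div_eq_mul_mod_div hdvd]
  have hcarry (j : ℕ) : 1 ≤ w 1 + w j ↔ c ≤ n * j % c + n := by
    have hc : (0 : ℚ) < c := by exact_mod_cast hn.trans_le' (Nat.zero_le n)
    rw [hwj, hwj, mul_one, Nat.mod_eq_of_lt hn, ← add_div, one_le_div hc, add_comm]
    exact_mod_cast Iff.rfl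
  have hfilter : {j ∈ Icc 1 (c - 1) | 1 ≤ w 1 + w j} = {j ∈ range c | c ≤ n * j % c + n} := by
    ext j
    simp only [mem_filter, mem_Icc, mem_range, hcarry]
    constructor
    · rintro ⟨hj, hle⟩
      exact ⟨by omega, hle⟩
    · rintro ⟨hj, hle⟩
      rcases j.eq_zero_or_pos with rfl | hj0
      · simp at hle; omega
      · exact ⟨by omega, hle⟩
  rw [hfilter, Nat.card_filter_range_le_mul_mod_add hn, Nat.mul_div_cancel _ (by omega)]

/-- For positive integers `m`, `c`, with `v` the unique integer with `0 ≤ v < c`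
and `m ≡ -v (mod c)`, and `w j` the fractional part of `-mj/c`, the number
`κ_{m,c}` of `j ∈ {1,…,c-1}` with `w 1 + w j ≥ 1` equals `v`. -/
theorem kappa_eq_residue (m c : ℕ) (hm : 0 < m) (hc : 0 < c) (v : ℤ)
    (hv0 : 0 ≤ v) (hvc : v < (c : ℤ)) (hmv : (m : ℤ) ≡ -v [ZMOD (c : ℤ)])
    (w : ℕ → ℚ) (hw : ∀ j, w j = Int.fract (-((m : ℚ) * j) / c)) :
    ((((Finset.Icc 1 (c - 1)).filter (fun j => 1 ≤ w 1 + w j)).card : ℤ)) = v :=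
  kappa_eq_residue_general m c v hv0 hvc hmv w hw
end

section
/- Let v and c be integers with 0 < v < c, and let t be an integer with 0 ≤ t ≤ v−1. Then among the integers j with 1 ≤ j ≤ c−1 and tc ≤ vj < (t+1)c, there is exactly one for which fract(v/c) + fract(vj/c) ≥ 1, namely the largest integer j satisfying vj < (t+1)c. -/
/-!
Inside the band `t c ≤ v j < (t+1) c` one has `fract (v j / c) = (v j - t c) / c`, and
`fract (v / c) = v / c` because `0 < v < c`. Hence `fract (v / c) + fract (v j / c) ≥ 1` says
exactly that `v (j + 1) ≥ (t + 1) c`, i.e. that `v (j + 1)` has left the band. Together with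
`v j < (t + 1) c` this characterizes the largest `j` with `v j < (t + 1) c`.
-/

section FloorRing

variable {K : Type*} [Field K] [LinearOrder K] [IsStrictOrderedRing K] [FloorRing K]

theorem Int.fract_intCast_div_of_mem_band {n c t : ℤ} (hc : 0 < c) (hlo : t * c ≤ n)
    (hhi : n < (t + 1) * c) :
    Int.fract ((n : K) / c) = ((n - t * c : ℤ) : K) / c := by
  have hcK : (0 : K) < c := by exact_mod_cast hc
  refine Int.fract_eq_iff.2 ⟨?_, ?_, t, ?_⟩
  · exact div_nonneg (by exact_mod_cast sub_nonneg.2 hlo) hcK.le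
  · rw [div_lt_one hcK]
    exact_mod_cast (by linarith : n - t * c < c)
  · push_cast
    field_simp
    ring

theorem one_le_fract_add_fract_iff_of_mem_band {v c t j : ℤ} (hv : 0 ≤ v) (hvc : v < c)
    (hlo : t * c ≤ v * j) (hhi : v * j < (t + 1) * c) :
    1 ≤ Int.fract ((v : K) / c) + Int.fract ((v : K) * j / c) ↔ (t + 1) * c ≤ v * (j + 1) := by
  have hc : 0 < c := hv.trans_lt hvc
  have hcK : (0 : K) < c := by exact_mod_cast hc
  have hfract_v : Int.fract ((v : K) / c) = v / c :=
    Int.fract_eq_iff.2 ⟨by positivity, (div_lt_one hcK).2 (by exact_mod_cast hvc), 0, by simp⟩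
  have hfract_vj := Int.fract_intCast_div_of_mem_band (K := K) hc hlo hhi
  push_cast at hfract_vj
  rw [hfract_v, hfract_vj, ← add_div, le_div_iff₀ hcK, one_mul]
  have hint : c ≤ v + (v * j - t * c) ↔ (t + 1) * c ≤ v * (j + 1) := by
    constructor <;> intro <;> linarith
  exact_mod_cast hint

end FloorRing

theorem Int.isGreatest_setOf_mul_lt_iff {v N j : ℤ} (hv : 0 < v) :
    IsGreatest {i : ℤ | v * i < N} j ↔ v * j < N ∧ N ≤ v * (j + 1) := by
  constructor
  · rintro ⟨hj, hmax⟩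
    refine ⟨hj, not_lt.1 fun hsucc => ?_⟩
    have : j + 1 ≤ j := hmax hsucc
    omega
  · rintro ⟨hj, hsucc⟩
    refine ⟨hj, fun i (hi : v * i < N) => ?_⟩
    by_contra! hji
    have : v * (j + 1) ≤ v * i := mul_le_mul_of_nonneg_left hji hv.le
    omega

theorem Int.exists_mul_lt_le_mul_succ {v : ℤ} (hv : 0 < v) (N : ℤ) :
    ∃ j, v * j < N ∧ N ≤ v * (j + 1) :=
  ⟨(N - 1) / v, by linarith [Int.mul_ediv_self_le (x := N - 1) hv.ne'],
    by linarith [Int.lt_mul_ediv_self_add (x := N - 1) hv]⟩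

/-- For integers `0 < v < c` and `0 ≤ t ≤ v - 1`, among the integers `j` with
`1 ≤ j ≤ c - 1` and `tc ≤ vj < (t+1)c`, there is exactly one with
`fract(v/c) + fract(vj/c) ≥ 1`, namely the largest integer `j` with
`vj < (t+1)c`. -/
theorem unique_jump_in_band (v c t : ℤ) (hv : 0 < v) (hvc : v < c)
    (ht0 : 0 ≤ t) (htv : t ≤ v - 1) :
    ∃ j : ℤ, IsGreatest {i : ℤ | v * i < (t + 1) * c} j ∧
      (1 ≤ j ∧ j ≤ c - 1 ∧ t * c ≤ v * j ∧ v * j < (t + 1) * c) ∧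
      1 ≤ Int.fract ((v : ℚ) / c) + Int.fract ((v : ℚ) * j / c) ∧
      ∀ j' : ℤ, 1 ≤ j' → j' ≤ c - 1 → t * c ≤ v * j' → v * j' < (t + 1) * c →
        1 ≤ Int.fract ((v : ℚ) / c) + Int.fract ((v : ℚ) * j' / c) → j' = j := by
  obtain ⟨j, hj, hsucc⟩ := Int.exists_mul_lt_le_mul_succ hv ((t + 1) * c)
  have hgreatest := (Int.isGreatest_setOf_mul_lt_iff hv).2 ⟨hj, hsucc⟩
  have hband : t * c ≤ v * j := by nlinarith
  have hj_pos : 1 ≤ j := by nlinarith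
  have hj_lt : j ≤ c - 1 := by nlinarith
  refine ⟨j, hgreatest, ⟨hj_pos, hj_lt, hband, hj⟩,
    (one_le_fract_add_fract_iff_of_mem_band hv.le hvc hband hj).2 hsucc, ?_⟩
  intro j' _ _ hlo' hhi' hjump'
  have hsucc' := (one_le_fract_add_fract_iff_of_mem_band hv.le hvc hlo' hhi').1 hjump'
  exact ((Int.isGreatest_setOf_mul_lt_iff hv).2 ⟨hhi', hsucc'⟩).unique hgreatest
end

section
/- Let m and c be positive integers. For each integer j with 1 ≤ j ≤ c−1 let w_j ∈ [0,1) be the fractional part of −mj/c, let κ^{(j)}_{m,c} = 1 if w_1 + w_j ≥ 1 and 0 otherwise, and let κ_{m,c} = Σ_{j=1}^{c−1} κ^{(j)}_{m,c}. Then c divides m + κ_{m,c}; and defining the integers s_1 = −(m + κ_{m,c})/c and, for 1 ≤ j ≤ c−1, s_j = j·s_1 + Σ_{i=1}^{j−1} κ^{(i)}_{m,c}, one has s_j ≤ −1 for every j with 1 ≤ j ≤ c−1. -/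
private lemma fract_add_fract' (a b : ℚ) :
    Int.fract (a + b) = Int.fract (Int.fract a + Int.fract b) := by
  conv_lhs => rw [← Int.fract_add_floor a, ← Int.fract_add_floor b]
  rw [show Int.fract a + ↑⌊a⌋ + (Int.fract b + ↑⌊b⌋)
      = Int.fract a + Int.fract b + ((⌊a⌋ + ⌊b⌋ : ℤ) : ℚ) by push_cast; ring,
    Int.fract_add_intCast]

/-- For positive integers `m`, `c`, with `w j` the fractional part of `-mj/c`,
indicators `κ' j = 1` if `w 1 + w j ≥ 1` and `0` otherwise, and
`κ = Σ_{j=1}^{c-1} κ' j`: `c` divides `m + κ`, and the integers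
`s j = j·s₁ + Σ_{i=1}^{j-1} κ' i` with `s₁ = -(m+κ)/c` satisfy `s j ≤ -1`
for all `1 ≤ j ≤ c - 1`. -/
theorem degrees_nonpositive (m c : ℕ) (hm : 0 < m) (hc : 0 < c)
    (w : ℕ → ℚ) (hw : ∀ j, w j = Int.fract (-((m : ℚ) * j) / c))
    (κ' : ℕ → ℤ) (hκ' : ∀ j, κ' j = if 1 ≤ w 1 + w j then 1 else 0)
    (κ : ℤ) (hκ : κ = ∑ j ∈ Finset.Icc 1 (c - 1), κ' j)
    (s : ℕ → ℤ)
    (hs : ∀ j, s j = (j : ℤ) * (-(((m : ℤ) + κ) / c)) + ∑ i ∈ Finset.Icc 1 (j - 1), κ' i) :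
    (c : ℤ) ∣ ((m : ℤ) + κ) ∧ ∀ j : ℕ, 1 ≤ j → j ≤ c - 1 → s j ≤ -1 := by
  have hc0 : (c : ℚ) ≠ 0 := Nat.cast_ne_zero.mpr hc.ne'
  -- bounds on w
  have hw0 : ∀ j, 0 ≤ w j := fun j => (hw j) ▸ Int.fract_nonneg _
  have hw1 : ∀ j, w j < 1 := fun j => (hw j) ▸ Int.fract_lt_one _
  -- recursion
  have hrec : ∀ j : ℕ, w (j + 1) = w j + w 1 - κ' j := by
    intro j
    have h1 : w (j + 1) = Int.fract (w j + w 1) := by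
      rw [hw (j+1), hw j, hw 1, ← fract_add_fract']
      congr 1
      push_cast
      field_simp
      ring
    rw [h1, hκ' j]
    by_cases h : 1 ≤ w 1 + w j
    · rw [if_pos h]
      have : Int.fract (w j + w 1) = Int.fract (w j + w 1 - 1) := by
        rw [show w j + w 1 - 1 = w j + w 1 + ((-1 : ℤ) : ℚ) by push_cast; ring,
          Int.fract_add_intCast]
      rw [this, Int.fract_eq_self.mpr ⟨by linarith [hw0 j, hw0 1], by
        linarith [hw1 j, hw1 1]⟩]
      push_cast; ring
    · rw [if_neg h]
      push_neg at h
      rw [Int.fract_eq_self.mpr ⟨by linarith [hw0 j, hw0 1], by linarith⟩]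
      push_cast; ring
  -- partial sums
  have hsum : ∀ j : ℕ, ((∑ i ∈ Finset.Icc 1 j, κ' i : ℤ) : ℚ)
      = (j + 1) * w 1 - w (j + 1) := by
    intro j
    induction j with
    | zero => simp
    | succ n ih =>
      rw [Finset.sum_Icc_succ_top (by omega : 1 ≤ n + 1)]
      push_cast at ih ⊢
      linarith [hrec (n + 1)]
  -- κ = c * w 1
  have hwc : w c = 0 := by
    rw [hw c, show -((m:ℚ) * c) / c = ((-(m:ℤ) : ℤ) : ℚ) by push_cast; field_simp,
      Int.fract_intCast]
  have hκq : (κ : ℚ) = c * w 1 := by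
    have := hsum (c - 1)
    rw [show (c - 1 + 1 : ℕ) = c by omega] at this
    rw [hκ]
    rw [this, hwc]
    push_cast [hc]
    ring
  -- the integer T
  set T : ℤ := -⌊(-(m:ℚ)) / c⌋ with hT
  have hw1' : w 1 = (-(m:ℚ))/c + T := by
    rw [hw 1, hT, Int.fract]
    push_cast
    ring
  have heqq : ((m:ℚ) + κ) = c * T := by
    rw [hκq, hw1']; field_simp; ring
  have heq : (m : ℤ) + κ = c * T := by exact_mod_cast heqq
  have hcz : (c : ℤ) ≠ 0 := by exact_mod_cast hc.ne'
  refine ⟨⟨T, heq⟩, fun j hj1 hj2 => ?_⟩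
  have hdiv : ((m : ℤ) + κ) / c = T := by
    rw [heq, Int.mul_ediv_cancel_left _ hcz]
  have hsq : (s j : ℚ) = ⌊(-((m:ℚ) * j)) / c⌋ := by
    have hs' := hs j
    rw [hdiv] at hs'
    have hsum' := hsum (j - 1)
    rw [show (j - 1 + 1 : ℕ) = j by omega] at hsum'
    rw [Nat.cast_sub hj1] at hsum'
    have : (s j : ℚ) = (j : ℚ) * (-T) + ((j:ℚ) * w 1 - w j) := by
      rw [hs']; push_cast [hsum']; ring
    rw [this, hw1', hw j, Int.fract]
    field_simp
    ring
  have hsj : s j = ⌊(-((m:ℚ) * j)) / c⌋ := by exact_mod_cast hsq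
  have hneg : (-((m:ℚ) * j)) / c < 0 := by
    apply div_neg_of_neg_of_pos
    · have : (0:ℚ) < (m:ℚ) * j := by positivity
      linarith
    · positivity
  have := Int.floor_lt.mpr (by exact_mod_cast hneg : (-((m:ℚ) * j)) / c < ((0:ℤ):ℚ))
  omega
end

section
/- Let K be a field, let n ≥ 1, and let s, t : {1,…,n} → ℤ. Let M be an n×n matrix whose (i,j) entry M_{ij} is a polynomial in K[X,Y] (two variables) such that M_{ij} = 0 whenever t(j) < s(i), and M_{ij} is homogeneous of degree t(j) − s(i) whenever t(j) ≥ s(i). If det M ≠ 0, then there exists a permutation σ of {1,…,n} such that s(σ(j)) ≤ t(j) for all j with 1 ≤ j ≤ n. -/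
/-- Let `K` be a field, `n ≥ 1`, `s t : Fin n → ℤ`, and let `M` be an `n × n`
matrix of polynomials in two variables over `K` such that `M i j = 0` whenever
`t j < s i`, and `M i j` is homogeneous of degree `t j - s i` whenever
`s i ≤ t j`. If `det M ≠ 0` then there is a permutation `σ` with
`s (σ j) ≤ t j` for all `j`. -/
theorem perm_of_det_ne_zero_homogeneous (K : Type*) [Field K] (n : ℕ) (hn : 1 ≤ n)
    (s t : Fin n → ℤ) (M : Matrix (Fin n) (Fin n) (MvPolynomial (Fin 2) K))
    (hzero : ∀ i j, t j < s i → M i j = 0)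
    (hhom : ∀ i j, s i ≤ t j → (M i j).IsHomogeneous (t j - s i).toNat)
    (hdet : M.det ≠ 0) :
    ∃ σ : Equiv.Perm (Fin n), ∀ j, s (σ j) ≤ t j := by
  by_contra h
  push_neg at h
  apply hdet
  rw [Matrix.det_apply]
  apply Finset.sum_eq_zero
  intro σ _
  obtain ⟨j, hj⟩ := h σ
  have hp : ∏ i, M (σ i) i = 0 :=
    Finset.prod_eq_zero (Finset.mem_univ j) (hzero (σ j) j hj)
  rw [hp, smul_zero]
end
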